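/- Let ρ ∈ (0,1), and let v, u be complex numbers with 0 < |u+1| < 1 and |u+1| < |v+1|. Let Y = (y_1,…,y_N) with y_N < ⋯ < y_1 and let (G_k), τ be as in the geometric random walk setup. Then the series ch_Y(v,u) := Σ_{x∈ℤ} ((1+u)/(1−ρ))^x E_{G_0=x}[ (1−ρ)^{G_τ}/(1+v)^{G_τ+1} · ((−v/(1+v))·((1−ρ)/ρ))^τ 1_{τ<N} ] converges absolutely; in particular, the contribution of x > y_1 sums to (1/(v−u))·((1+u)/(1+v))^{y_1+1}, and all terms with x < y_N + N vanish. -/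

import Mathlib

/-!
If `x > y_1` the walk has exited at time `0`, so the summand is `((1+u)/(1+v))^x / (1+v)`, a
geometric series in `x` of ratio `‖1+u‖/‖1+v‖ < 1`. If `x < y_N + N`, the walk never exits before
time `N`, because every step goes down by at least `1` while `y_{m+1} + m` is non-increasing, so the
summand vanishes. Only finitely many `x` remain.
-/

open MeasureTheory ProbabilityTheory Complex
open scoped Classical

/-- The walk `(W_k)` on `ℤ` (started at `0`) has i.i.d. steps with law
`P(step = −j) = ρ(1−ρ)^{j−1}`, `j ≥ 1`. -/
def IsNegGeomWalk (ρ : ℝ) {Ω : Type*} [MeasurableSpace Ω] (μ : Measure Ω)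
    (W : ℕ → Ω → ℤ) : Prop :=
  (∀ n, Measurable (W n)) ∧
  (∀ (n : ℕ) (j : ℤ), μ {ω | W (n + 1) ω - W n ω = j} =
      ENNReal.ofReal (if j ≤ -1 then ρ * (1 - ρ) ^ (-j - 1) else 0)) ∧
  iIndepFun (fun n : ℕ => fun ω => W (n + 1) ω - W n ω) μ

theorem hasSum_ite_lt_zpow {K : Type*} [NormedDivisionRing K] {r : K} (hr0 : r ≠ 0)
    (hr : ‖r‖ < 1) (a : ℤ) :
    HasSum (fun x : ℤ => if a < x then r ^ x else 0) (r ^ (a + 1) * (1 - r)⁻¹) := by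
  have hshift : Function.Injective fun n : ℕ => a + 1 + n := fun m n h => by
    simpa using h
  refine (hshift.hasSum_iff fun x hx =>
    if_neg fun hax => hx ⟨(x - a - 1).toNat, by dsimp only; omega⟩).mp ?_
  have hterm : ∀ n : ℕ,
      (if a < a + 1 + n then r ^ (a + 1 + n : ℤ) else 0) = r ^ (a + 1) * r ^ n :=
    fun n => by rw [if_pos (by omega), zpow_add₀ hr0, zpow_natCast]
  simpa [Function.comp_def, hterm] using (hasSum_geometric_of_norm_lt_one hr).mul_left (r ^ (a + 1))

theorem summable_of_eq_zero_of_lt {E : Type*} [AddCommGroup E] [TopologicalSpace E]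
    [IsTopologicalAddGroup E] {f : ℤ → E} {a b : ℤ} (hf : ∀ x < b, f x = 0)
    (htail : Summable fun x => if a < x then f x else 0) : Summable f := by
  have hhead : Summable fun x => if a < x then 0 else f x :=
    summable_of_ne_finset_zero (s := Finset.Icc b a) fun x hx => by
      simp only [Finset.mem_Icc, not_and_or, not_le] at hx
      split_ifs with hax
      · rfl
      · exact hf x (hx.resolve_right hax)
  refine (htail.add hhead).congr fun x => ?_
  split_ifs <;> simp

theorem antitoneOn_add_natCast {N : ℕ} {y : ℕ → ℤ} (hy : ∀ m, m + 1 < N → y (m + 1) < y m) :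
    AntitoneOn (fun m : ℕ => y m + m) (Set.Iio N) :=
  antitoneOn_of_succ_le Set.ordConnected_Iio fun m _ _ hm => by
    have := hy m (by simpa using hm)
    simp only [Order.succ_eq_add_one]
    push_cast
    omega

namespace IsNegGeomWalk

variable {ρ : ℝ} {Ω : Type*} [MeasurableSpace Ω] {μ : Measure Ω} {W : ℕ → Ω → ℤ}

theorem ae_step_le (hW : IsNegGeomWalk ρ μ W) (n : ℕ) :
    ∀ᵐ ω ∂μ, W (n + 1) ω - W n ω ≤ -1 := by
  rw [ae_iff]
  have hsub : {ω | ¬ W (n + 1) ω - W n ω ≤ -1} ⊆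
      ⋃ j : ℕ, {ω | W (n + 1) ω - W n ω = (j : ℤ)} := fun ω hω =>
    Set.mem_iUnion.mpr
      ⟨(W (n + 1) ω - W n ω).toNat, by simp only [Set.mem_ofPred_eq] at hω ⊢; omega⟩
  refine measure_mono_null hsub (measure_iUnion_null fun j => ?_)
  rw [hW.2.1 n j, if_neg (by omega), ENNReal.ofReal_zero]

theorem ae_le_neg (hW : IsNegGeomWalk ρ μ W) (hW0 : ∀ ω, W 0 ω = 0) :
    ∀ᵐ ω ∂μ, ∀ m : ℕ, W m ω ≤ -m := by
  filter_upwards [ae_all_iff.mpr hW.ae_step_le] with ω hω m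
  induction m with
  | zero => simp [hW0 ω]
  | succ n ih =>
    have := hω n
    push_cast
    omega

end IsNegGeomWalk

section Summand

variable {Ω : Type*} [MeasurableSpace Ω]

/-- `τ = min {m : G_m > y_{m+1}}` for `G_m = x + W_m`, with `y` 0-based. -/
noncomputable def exitTime (W : ℕ → Ω → ℤ) (y : ℕ → ℤ) (x : ℤ) (ω : Ω) : ℕ :=
  sInf {m | y m < x + W m ω}

noncomputable def chSummand (ρ : ℝ) (μ : Measure Ω) (W : ℕ → Ω → ℤ) (N : ℕ) (y : ℕ → ℤ)
    (u v : ℂ) (x : ℤ) : ℂ :=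
  ((u + 1) / ((1 : ℂ) - (ρ : ℂ))) ^ x *
    ∫ ω, (if _ : ∃ m, m < N ∧ y m < x + W m ω then
        ((1 : ℂ) - (ρ : ℂ)) ^ (x + W (exitTime W y x ω) ω) /
          (1 + v) ^ (x + W (exitTime W y x ω) ω + 1) *
          ((-v / (1 + v)) * (((1 : ℂ) - (ρ : ℂ)) / (ρ : ℂ))) ^ exitTime W y x ω
      else 0) ∂μ

variable {ρ : ℝ} {μ : Measure Ω} {W : ℕ → Ω → ℤ} {N : ℕ} {y : ℕ → ℤ} {u v : ℂ} {x : ℤ}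

omit [MeasurableSpace Ω] in
theorem exitTime_eq_zero (hW0 : ∀ ω, W 0 ω = 0) (hx : y 0 < x) (ω : Ω) : exitTime W y x ω = 0 :=
  Nat.sInf_eq_zero.mpr (Or.inl (by simpa [hW0 ω] using hx))

theorem chSummand_of_lt [IsProbabilityMeasure μ] (hρ : ρ ≠ 1) (hW0 : ∀ ω, W 0 ω = 0)
    (hN : 1 ≤ N) (hv : v + 1 ≠ 0) (hx : y 0 < x) :
    chSummand ρ μ W N y u v x = ((u + 1) / (v + 1)) ^ x * (v + 1)⁻¹ := by
  have hρ' : (1 : ℂ) - ρ ≠ 0 := sub_ne_zero.mpr (by exact_mod_cast hρ.symm)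
  have hexit : ∀ ω, ∃ m, m < N ∧ y m < x + W m ω := fun ω => ⟨0, hN, by simpa [hW0 ω] using hx⟩
  simp only [chSummand, dif_pos (hexit _), exitTime_eq_zero hW0 hx, hW0, add_zero, pow_zero,
    mul_one, integral_const, probReal_univ, one_smul]
  rw [add_comm 1 v, zpow_add_one₀ hv, div_zpow, div_zpow]
  field_simp

theorem chSummand_eq_zero (hW : IsNegGeomWalk ρ μ W) (hW0 : ∀ ω, W 0 ω = 0)
    (hy : ∀ m, m + 1 < N → y (m + 1) < y m) (hx : x < y (N - 1) + N) :
    chSummand ρ μ W N y u v x = 0 := by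
  suffices h : ∀ᵐ ω ∂μ, ¬ ∃ m, m < N ∧ y m < x + W m ω by
    rw [chSummand]
    refine mul_eq_zero_of_right _ (integral_eq_zero_of_ae ?_)
    filter_upwards [h] with ω hω using dif_neg hω
  filter_upwards [hW.ae_le_neg hW0] with ω hω
  rintro ⟨m, hm, hym⟩
  have := hω m
  have : y (N - 1) + (N - 1 : ℕ) ≤ y m + m :=
    antitoneOn_add_natCast hy hm (show N - 1 < N by omega) (by omega)
  omega

theorem hasSum_ite_lt_chSummand [IsProbabilityMeasure μ] (hρ : ρ ≠ 1) (hW0 : ∀ ω, W 0 ω = 0)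
    (hN : 1 ≤ N) (hu0 : 0 < ‖u + 1‖) (huv : ‖u + 1‖ < ‖v + 1‖) :
    HasSum (fun x => if y 0 < x then chSummand ρ μ W N y u v x else 0)
      (1 / (v - u) * ((u + 1) / (v + 1)) ^ (y 0 + 1)) := by
  have hv : v + 1 ≠ 0 := norm_pos_iff.mp (hu0.trans huv)
  set r := (u + 1) / (v + 1)
  have hr0 : r ≠ 0 := div_ne_zero (norm_pos_iff.mp hu0) hv
  have hr : ‖r‖ < 1 := by rwa [norm_div, div_lt_one (hu0.trans huv)]
  have hvu : (1 - r) * (v + 1) = v - u := by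
    simp only [r]
    field_simp
    ring
  have hgeom := (hasSum_ite_lt_zpow hr0 hr (y 0)).mul_right (v + 1)⁻¹
  rw [mul_assoc, ← mul_inv, hvu, mul_comm] at hgeom
  rw [one_div]
  refine hgeom.congr_fun fun x => ?_
  split_ifs with hx
  · exact chSummand_of_lt hρ hW0 hN hv hx
  · rw [zero_mul]

end Summand

theorem statement11_general (ρ : ℝ) (h1 : ρ < 1)
    {Ω : Type*} [MeasurableSpace Ω] (μ : Measure Ω) [IsProbabilityMeasure μ]
    (W : ℕ → Ω → ℤ) (hW : IsNegGeomWalk ρ μ W) (hW0 : ∀ ω, W 0 ω = 0)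
    (N : ℕ) (hN : 1 ≤ N) (y : ℕ → ℤ) (hy : ∀ m, m + 1 < N → y (m + 1) < y m)
    (u v : ℂ) (hu0 : 0 < ‖u + 1‖) (huv : ‖u + 1‖ < ‖v + 1‖) :
    let T : ℤ → ℂ := fun x =>
      ((u + 1) / ((1 : ℂ) - (ρ : ℂ))) ^ x *
        ∫ ω, (if _ : ∃ m, m < N ∧ y m < x + W m ω then
            ((1 : ℂ) - (ρ : ℂ)) ^ (x + W (sInf {m | y m < x + W m ω}) ω) /
              (1 + v) ^ (x + W (sInf {m | y m < x + W m ω}) ω + 1) *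
              ((-v / (1 + v)) * (((1 : ℂ) - (ρ : ℂ)) / (ρ : ℂ))) ^
                (sInf {m | y m < x + W m ω})
          else 0) ∂μ
    Summable (fun x : ℤ => ‖T x‖) ∧
    (∑' x : ℤ, (if y 0 < x then T x else 0)) =
      1 / (v - u) * ((u + 1) / (v + 1)) ^ (y 0 + 1) ∧
    (∀ x : ℤ, x < y (N - 1) + N → T x = 0) := by
  intro T
  have hT : T = chSummand ρ μ W N y u v := rfl
  rw [hT]
  have hzero : ∀ x, x < y (N - 1) + N → chSummand ρ μ W N y u v x = 0 :=
    fun x hx => chSummand_eq_zero hW hW0 hy hx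
  have htail := hasSum_ite_lt_chSummand (μ := μ) (W := W) (y := y) h1.ne hW0 hN hu0 huv
  exact ⟨summable_norm_iff.mpr (summable_of_eq_zero_of_lt hzero htail.summable), htail.tsum_eq,
    hzero⟩

/-- absolute convergence of the series defining `ch_Y(v,u)`.  With the walk
started at `x` realized as `x + W_m`, `y m` denoting `y_{m+1}` (0-based, strictly
decreasing), and `τ = min{m : G_m > y_{m+1}}`, the series
`Σ_{x∈ℤ} ((1+u)/(1−ρ))^x E_{G_0=x}[(1−ρ)^{G_τ}/(1+v)^{G_τ+1} ((−v/(1+v))((1−ρ)/ρ))^τ 1_{τ<N}]`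
converges absolutely; the terms with `x > y_1` sum to `(1/(v−u)) ((1+u)/(1+v))^{y_1+1}`,
and the terms with `x < y_N + N` vanish. -/
theorem statement11 (ρ : ℝ) (h0 : 0 < ρ) (h1 : ρ < 1)
    {Ω : Type*} [MeasurableSpace Ω] (μ : Measure Ω) [IsProbabilityMeasure μ]
    (W : ℕ → Ω → ℤ) (hW : IsNegGeomWalk ρ μ W) (hW0 : ∀ ω, W 0 ω = 0)
    (N : ℕ) (hN : 1 ≤ N) (y : ℕ → ℤ) (hy : ∀ m, m + 1 < N → y (m + 1) < y m)
    (u v : ℂ) (hu0 : 0 < ‖u + 1‖) (hu1 : ‖u + 1‖ < 1) (huv : ‖u + 1‖ < ‖v + 1‖) :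
    let T : ℤ → ℂ := fun x =>
      ((u + 1) / ((1 : ℂ) - (ρ : ℂ))) ^ x *
        ∫ ω, (if _ : ∃ m, m < N ∧ y m < x + W m ω then
            ((1 : ℂ) - (ρ : ℂ)) ^ (x + W (sInf {m | y m < x + W m ω}) ω) /
              (1 + v) ^ (x + W (sInf {m | y m < x + W m ω}) ω + 1) *
              ((-v / (1 + v)) * (((1 : ℂ) - (ρ : ℂ)) / (ρ : ℂ))) ^
                (sInf {m | y m < x + W m ω})
          else 0) ∂μ
    Summable (fun x : ℤ => ‖T x‖) ∧
    (∑' x : ℤ, (if y 0 < x then T x else 0)) =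
      1 / (v - u) * ((u + 1) / (v + 1)) ^ (y 0 + 1) ∧
    (∀ x : ℤ, x < y (N - 1) + N → T x = 0) :=
  statement11_general ρ h1 μ W hW hW0 N hN y hy u v hu0 huv
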